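/- arXiv:1206.3613 — 4 statements merged into one kernel-verified Lean document; each statement's English description precedes it below -/
import Mathlib

section
/- Let C be a finite EI category. Then every morphism in C that is not an isomorphism can be written as a composite of finitely many unfactorizable morphisms. -/
open CategoryTheory

/-- A morphism `α : x ⟶ z` in a category is unfactorizable if it is not an isomorphism
and in any factorization `α = β ≫ γ`, either `β` or `γ` is an isomorphism. -/
def Unfactorizable {C : Type} [SmallCategory C] {x z : C} (α : x ⟶ z) : Prop :=
  ¬ IsIso α ∧ ∀ (y : C) (β : x ⟶ y) (γ : y ⟶ z), β ≫ γ = α → IsIso β ∨ IsIso γ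

/-- The predicate that a morphism is a composite of finitely many unfactorizable morphisms. -/
inductive IsCompositeOfUnfactorizables {C : Type} [SmallCategory C] :
    ∀ {x y : C}, (x ⟶ y) → Prop
  | single {x y : C} (α : x ⟶ y) (h : Unfactorizable α) : IsCompositeOfUnfactorizables α
  | comp {x y z : C} (α : x ⟶ y) (β : y ⟶ z) (hα : Unfactorizable α)
      (hβ : IsCompositeOfUnfactorizables β) : IsCompositeOfUnfactorizables (α ≫ β)

/-- In an EI category, a non-iso `f : x ⟶ y` excludes any morphism `y ⟶ x`. -/
lemma noRev {C : Type} [SmallCategory C]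
    (hEI : ∀ (x : C) (f : x ⟶ x), IsIso f)
    {x y : C} (f : x ⟶ y) (hf : ¬ IsIso f) (g : y ⟶ x) : False := by
  haveI h1 := hEI x (f ≫ g)
  haveI h2 := hEI y (g ≫ f)
  apply hf
  refine ⟨g ≫ inv (f ≫ g), ?_, ?_⟩
  · rw [← Category.assoc, IsIso.hom_inv_id]
  · have hs : (inv (g ≫ f) ≫ g) ≫ f = 𝟙 y := by
      rw [Category.assoc, IsIso.inv_hom_id]
    have hr : f ≫ (g ≫ inv (f ≫ g)) = 𝟙 x := by
      rw [← Category.assoc, IsIso.hom_inv_id]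
    have : g ≫ inv (f ≫ g) = inv (g ≫ f) ≫ g := by
      calc g ≫ inv (f ≫ g) = 𝟙 y ≫ (g ≫ inv (f ≫ g)) := by simp
        _ = ((inv (g ≫ f) ≫ g) ≫ f) ≫ (g ≫ inv (f ≫ g)) := by rw [hs]
        _ = (inv (g ≫ f) ≫ g) ≫ (f ≫ (g ≫ inv (f ≫ g))) := by simp
        _ = inv (g ≫ f) ≫ g := by rw [hr]; simp
    rw [this, hs]

lemma comp_composite {C : Type} [SmallCategory C] {x y z : C} {β : x ⟶ y} {γ : y ⟶ z}
    (hβ : IsCompositeOfUnfactorizables β) (hγ : IsCompositeOfUnfactorizables γ) :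
    IsCompositeOfUnfactorizables (β ≫ γ) := by
  induction hβ with
  | single α h => exact .comp α γ h hγ
  | comp α δ hα _ ih => rw [Category.assoc]; exact .comp α (δ ≫ γ) hα (ih hγ)

/-- In a finite EI category, every non-isomorphism is a composite of finitely many
unfactorizable morphisms. -/
theorem nonIso_isCompositeOfUnfactorizables
    {C : Type} [SmallCategory C] [Finite (Σ x y : C, x ⟶ y)]
    (hEI : ∀ (x : C) (f : x ⟶ x), IsIso f)
    {x y : C} (α : x ⟶ y) (hα : ¬ IsIso α) :
    IsCompositeOfUnfactorizables α := by
  have hC : Finite C := Finite.of_injective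
    (fun x => (⟨x, x, 𝟙 x⟩ : Σ x y : C, x ⟶ y)) (fun a b h => congrArg Sigma.fst h)
  set S : C → C → Set C := fun a b => {z | Nonempty (a ⟶ z) ∧ Nonempty (z ⟶ b)} with hS
  suffices H : ∀ n (x y : C) (α : x ⟶ y), ¬ IsIso α → (S x y).ncard ≤ n →
      IsCompositeOfUnfactorizables α from H _ x y α hα le_rfl
  intro n
  induction n using Nat.strong_induction_on with
  | _ n ih =>
    intro x y α hα hn
    by_cases hu : Unfactorizable α
    · exact .single α hu
    · rw [Unfactorizable] at hu
      push_neg at hu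
      obtain ⟨w, β, γ, hcomp, hβ, hγ⟩ := hu hα
      have hfin : ∀ a b : C, (S a b).Finite := fun a b => Set.toFinite _
      have hxw : (S x w).ncard < (S x y).ncard := by
        apply Set.ncard_lt_ncard _ (hfin x y)
        constructor
        · rintro z ⟨⟨f⟩, ⟨g⟩⟩; exact ⟨⟨f⟩, ⟨g ≫ γ⟩⟩
        · intro hsub
          have hy : y ∈ S x y := ⟨⟨α⟩, ⟨𝟙 y⟩⟩
          obtain ⟨-, ⟨g⟩⟩ := hsub hy
          exact noRev hEI γ hγ g
      have hwy : (S w y).ncard < (S x y).ncard := by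
        apply Set.ncard_lt_ncard _ (hfin x y)
        constructor
        · rintro z ⟨⟨f⟩, ⟨g⟩⟩; exact ⟨⟨β ≫ f⟩, ⟨g⟩⟩
        · intro hsub
          have hx : x ∈ S x y := ⟨⟨𝟙 x⟩, ⟨α⟩⟩
          obtain ⟨⟨f⟩, -⟩ := hsub hx
          exact noRev hEI β hβ f
      have h1 := ih _ (lt_of_lt_of_le hxw hn) x w β hβ le_rfl
      have h2 := ih _ (lt_of_lt_of_le hwy hn) w y γ hγ le_rfl
      rw [← hcomp]
      exact comp_composite h1 h2
end

section
/- Let G and H be groups with commuting right G-action and left H-action on a set X (an (H,G)-biset), and fix α ∈ X. Define G₀ = {g : α·g = α}, G₁ = {g : ∃ h, α·g = h·α}, H₀ = {h : h·α = α}, H₁ = {h : ∃ g, h·α = α·g}. Then there is a group isomorphism G₁/G₀ ≅ H₁/H₀, given by sending the class of g ∈ G₁ to the class of any h ∈ H₁ satisfying α·g = h·α. -/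
open MulOpposite

/-- For an `(H,G)`-biset `X` with a fixed point `α`, with point stabilizers `G₀, H₀` and
orbit stabilizers `G₁ = Stab_G(H·α)`, `H₁ = Stab_H(α·G)`, there is a group isomorphism
`G₁/G₀ ≅ H₁/H₀` sending the class of `g` to the class of any `h` with `α·g = h·α`. -/
theorem biset_stabilizer_quotients_iso
    {G H X : Type} [Group G] [Group H] [MulAction Gᵐᵒᵖ X] [MulAction H X]
    [SMulCommClass H Gᵐᵒᵖ X] (α : X)
    (G₀ G₁ : Subgroup G) (H₀ H₁ : Subgroup H)
    (hG₀ : (G₀ : Set G) = {g : G | op g • α = α})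
    (hG₁ : (G₁ : Set G) = {g : G | ∃ h : H, op g • α = h • α})
    (hH₀ : (H₀ : Set H) = {h : H | h • α = α})
    (hH₁ : (H₁ : Set H) = {h : H | ∃ g : G, h • α = op g • α})
    [(G₀.subgroupOf G₁).Normal] [(H₀.subgroupOf H₁).Normal] :
    ∃ φ : (G₁ ⧸ G₀.subgroupOf G₁) ≃* (H₁ ⧸ H₀.subgroupOf H₁),
      ∀ (g : G) (hg : g ∈ G₁) (h : H) (hh : h ∈ H₁),
        op g • α = h • α →
          φ (QuotientGroup.mk ⟨g, hg⟩) = QuotientGroup.mk ⟨h, hh⟩ := by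
  classical
  -- membership characterizations
  have memG₀ : ∀ g : G, g ∈ G₀ ↔ op g • α = α := by
    intro g
    constructor
    · intro hg; have : g ∈ (G₀ : Set G) := hg; rwa [hG₀] at this
    · intro hg; have : g ∈ {g : G | op g • α = α} := hg
      rw [← hG₀] at this; exact this
  have memH₀ : ∀ h : H, h ∈ H₀ ↔ h • α = α := by
    intro h
    constructor
    · intro hh; have : h ∈ (H₀ : Set H) := hh; rwa [hH₀] at this
    · intro hh; have : h ∈ {h : H | h • α = α} := hh
      rw [← hH₀] at this; exact this
  have memG₁ : ∀ g : G, g ∈ G₁ ↔ ∃ h : H, op g • α = h • α := by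
    intro g
    constructor
    · intro hg; have : g ∈ (G₁ : Set G) := hg; rwa [hG₁] at this
    · intro hg; have : g ∈ {g : G | ∃ h : H, op g • α = h • α} := hg
      rw [← hG₁] at this; exact this
  have memH₁ : ∀ h : H, h ∈ H₁ ↔ ∃ g : G, h • α = op g • α := by
    intro h
    constructor
    · intro hh; have : h ∈ (H₁ : Set H) := hh; rwa [hH₁] at this
    · intro hh; have : h ∈ {h : H | ∃ g : G, h • α = op g • α} := hh
      rw [← hH₁] at this; exact this
  -- choice of h for each g in G₁
  have key : ∀ g : G₁, ∃ h : H₁, op (g : G) • α = (h : H) • α := by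
    rintro ⟨g, hg⟩
    obtain ⟨h, hh⟩ := (memG₁ g).1 hg
    exact ⟨⟨h, (memH₁ h).2 ⟨g, hh.symm⟩⟩, hh⟩
  let c : G₁ → H₁ := fun g => Classical.choose (key g)
  have hc : ∀ g : G₁, op (g : G) • α = (c g : H) • α := fun g =>
    Classical.choose_spec (key g)
  -- well-definedness in the quotient
  have mk_eq : ∀ a b : H₁, (a : H) • α = (b : H) • α →
      (QuotientGroup.mk a : H₁ ⧸ H₀.subgroupOf H₁) = QuotientGroup.mk b := by
    intro a b hab
    refine (QuotientGroup.eq).mpr ?_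
    have : ((a⁻¹ * b : H₁) : H) • α = α := by
      push_cast
      rw [mul_smul, ← hab, ← mul_smul, inv_mul_cancel, one_smul]
    exact (Subgroup.mem_subgroupOf).2 ((memH₀ _).2 this)
  -- the homomorphism
  let f : G₁ →* H₁ ⧸ H₀.subgroupOf H₁ :=
    { toFun := fun g => QuotientGroup.mk (c g)
      map_one' := by
        refine (mk_eq (c 1) 1 ?_).trans rfl
        have h1 := hc 1
        simp only [OneMemClass.coe_one, op_one, one_smul] at h1 ⊢
        exact h1.symm
      map_mul' := by
        intro g₁ g₂
        refine (mk_eq (c (g₁ * g₂)) (c g₁ * c g₂) ?_).trans ?_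
        · have h12 := hc (g₁ * g₂)
          have h1 := hc g₁
          have h2 := hc g₂
          rw [← h12]
          show op ((g₁ : G) * (g₂ : G)) • α = ((c g₁ : H) * (c g₂ : H)) • α
          rw [op_mul, mul_smul, h1, ← smul_comm, h2, ← mul_smul]
        · simp [QuotientGroup.mk_mul] }
  have f_mk : ∀ (g : G₁) (h : H) (hh : h ∈ H₁), op (g : G) • α = h • α →
      f g = QuotientGroup.mk ⟨h, hh⟩ := by
    intro g h hh hgh
    exact mk_eq (c g) ⟨h, hh⟩ (by rw [← hc g, hgh])
  -- kernel
  have hker : f.ker = G₀.subgroupOf G₁ := by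
    ext g
    constructor
    · intro hg
      have : (QuotientGroup.mk (c g) : H₁ ⧸ H₀.subgroupOf H₁) = 1 := hg
      rw [QuotientGroup.eq_one_iff] at this
      have hcg : ((c g : H₁) : H) • α = α := (memH₀ _).1 ((Subgroup.mem_subgroupOf).1 this)
      exact (Subgroup.mem_subgroupOf).2 ((memG₀ _).2 (by rw [hc g, hcg]))
    · intro hg
      have hgα : op (g : G) • α = α := (memG₀ _).1 ((Subgroup.mem_subgroupOf).1 hg)
      have : f g = QuotientGroup.mk (⟨1, (memH₁ 1).2 ⟨1, by simp⟩⟩ : H₁) :=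
        f_mk g 1 _ (by simpa using hgα)
      show f g = 1
      rw [this]
      exact (QuotientGroup.eq_one_iff _).2
        ((Subgroup.mem_subgroupOf).2 ((memH₀ 1).2 (one_smul _ _)))
  -- surjectivity
  have hsurj : Function.Surjective f := by
    intro y
    induction y using QuotientGroup.induction_on with
    | H h =>
      obtain ⟨g, hgα⟩ := (memH₁ (h : H)).1 h.2
      have hg : g ∈ G₁ := (memG₁ g).2 ⟨h, hgα.symm⟩
      exact ⟨⟨g, hg⟩, (f_mk ⟨g, hg⟩ h h.2 hgα.symm).trans (by simp)⟩
  refine ⟨(QuotientGroup.quotientMulEquivOfEq hker.symm).trans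
    (QuotientGroup.quotientKerEquivOfSurjective f hsurj), ?_⟩
  intro g hg h hh hgh
  have h1 : (QuotientGroup.quotientMulEquivOfEq hker.symm)
      (QuotientGroup.mk ⟨g, hg⟩) = QuotientGroup.mk ⟨g, hg⟩ := rfl
  have h2 : (QuotientGroup.quotientKerEquivOfSurjective f hsurj)
      (QuotientGroup.mk ⟨g, hg⟩) = f ⟨g, hg⟩ := rfl
  simp only [MulEquiv.trans_apply, h1, h2]
  exact f_mk ⟨g, hg⟩ h hh hgh
end

section
/- Let G and H be groups with commuting right G-action and left H-action on a set X, fix α ∈ X, and set G₀ = {g : α·g = α}, G₁ = {g : ∃ h ∈ H, α·g = h·α}, H₀ = {h : h·α = α}, H₁ = {h : ∃ g ∈ G, h·α = α·g}. Let K be a subgroup of G₁ containing G₀, and define L = {h ∈ H : h·(α·K) = α·K} = {h ∈ H : ∃ g ∈ K, h·α = α·g}. Then L is a subgroup of H₁, H₀ is a normal subgroup of L, and L/H₀ ≅ K/G₀ as groups. -/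
open MulOpposite

/-!
The pairs `(h, g)` with `h·α = α·g` form a subgroup `Γ` of `H × G`, because the two actions
commute. Restricted to `L × K` it projects onto both factors (onto `K` because `K ≤ G₁`), and
its Goursat subgroups `{l | (l, 1) ∈ Γ}` and `{k | (1, k) ∈ Γ}` are `H₀ ∩ L` and `G₀ ∩ K`.
Goursat's lemma then identifies `L ⧸ (H₀ ∩ L)` with `K ⧸ (G₀ ∩ K)`.
-/

namespace Biset

variable {G H X : Type*} [Group G] [Group H] [MulAction Gᵐᵒᵖ X] [MulAction H X]
  [SMulCommClass H Gᵐᵒᵖ X]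

def pairStabilizer (α : X) : Subgroup (H × G) where
  carrier := {p | p.1 • α = op p.2 • α}
  one_mem' := by simp
  mul_mem' := by
    rintro ⟨h₁, g₁⟩ ⟨h₂, g₂⟩ (e₁ : h₁ • α = op g₁ • α) (e₂ : h₂ • α = op g₂ • α)
    change (h₁ * h₂) • α = op (g₁ * g₂) • α
    rw [mul_smul, e₂, smul_comm, e₁, op_mul, mul_smul]
  inv_mem' := by
    rintro ⟨h, g⟩ (e : h • α = op g • α)
    change h⁻¹ • α = op g⁻¹ • α
    rw [op_inv, eq_inv_smul_iff, ← smul_comm, ← e, inv_smul_smul]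

@[simp]
lemma mem_pairStabilizer {α : X} {p : H × G} :
    p ∈ pairStabilizer α ↔ p.1 • α = op p.2 • α :=
  Iff.rfl

variable (H) in
def leftPartner (α : X) (K : Subgroup G) : Subgroup H :=
  (pairStabilizer α ⊓ (⊤ : Subgroup H).prod K).map (MonoidHom.fst H G)

lemma mem_leftPartner {α : X} {K : Subgroup G} {h : H} :
    h ∈ leftPartner H α K ↔ ∃ g ∈ K, h • α = op g • α := by
  simp [leftPartner, Subgroup.mem_prod, and_comm]

variable (H) in
lemma coe_leftPartner (α : X) (K : Subgroup G) :
    (leftPartner H α K : Set H) = {h : H | ∃ g ∈ K, h • α = op g • α} :=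
  Set.ext fun _ ↦ mem_leftPartner

lemma stabilizer_le_leftPartner (α : X) (K : Subgroup G) :
    MulAction.stabilizer H α ≤ leftPartner H α K := by
  intro h (hh : h • α = α)
  exact mem_leftPartner.2 ⟨1, K.one_mem, by simpa using hh⟩

variable (H) in
def pairStabilizerOn (α : X) (K : Subgroup G) : Subgroup (leftPartner H α K × K) :=
  (pairStabilizer α).comap ((leftPartner H α K).subtype.prodMap K.subtype)

@[simp]
lemma mem_pairStabilizerOn {α : X} {K : Subgroup G} {p : leftPartner H α K × K} :
    p ∈ pairStabilizerOn H α K ↔ (p.1 : H) • α = op (p.2 : G) • α :=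
  Iff.rfl

variable (H) in
lemma fst_pairStabilizerOn_surjective (α : X) (K : Subgroup G) :
    Function.Surjective (Prod.fst ∘ (pairStabilizerOn H α K).subtype) := by
  rintro ⟨h, hh⟩
  obtain ⟨g, hg, e⟩ := mem_leftPartner.1 hh
  exact ⟨⟨(⟨h, hh⟩, ⟨g, hg⟩), e⟩, rfl⟩

lemma snd_pairStabilizerOn_surjective (α : X) {K : Subgroup G}
    (hK : ∀ g ∈ K, ∃ h : H, op g • α = h • α) :
    Function.Surjective (Prod.snd ∘ (pairStabilizerOn H α K).subtype) := by
  rintro ⟨g, hg⟩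
  obtain ⟨h, e⟩ := hK g hg
  exact ⟨⟨(⟨h, mem_leftPartner.2 ⟨g, hg, e.symm⟩⟩, ⟨g, hg⟩), e.symm⟩, rfl⟩

lemma mem_goursatFst_pairStabilizerOn {α : X} {K : Subgroup G} {h : leftPartner H α K} :
    h ∈ (pairStabilizerOn H α K).goursatFst ↔ (h : H) • α = α := by
  simp

lemma mem_goursatSnd_pairStabilizerOn {α : X} {K : Subgroup G} {g : K} :
    g ∈ (pairStabilizerOn H α K).goursatSnd ↔ op (g : G) • α = α := by
  simp [eq_comm]

end Biset

open Biset in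
theorem biset_intermediate_stabilizer_iso_general
    {G H X : Type} [Group G] [Group H] [MulAction Gᵐᵒᵖ X] [MulAction H X]
    [SMulCommClass H Gᵐᵒᵖ X] (α : X)
    (G₀ G₁ : Subgroup G) (H₀ H₁ : Subgroup H)
    (hG₀ : (G₀ : Set G) = {g : G | op g • α = α})
    (hG₁ : (G₁ : Set G) = {g : G | ∃ h : H, op g • α = h • α})
    (hH₀ : (H₀ : Set H) = {h : H | h • α = α})
    (hH₁ : (H₁ : Set H) = {h : H | ∃ g : G, h • α = op g • α})
    (K : Subgroup G) (hKG₁ : K ≤ G₁)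
    [(G₀.subgroupOf K).Normal] :
    ∃ L : Subgroup H,
      ((L : Set H) = {h : H | ∃ g ∈ K, h • α = op g • α}) ∧
      L ≤ H₁ ∧ H₀ ≤ L ∧
      ∃ hn : (H₀.subgroupOf L).Normal,
        letI := hn
        Nonempty ((L ⧸ H₀.subgroupOf L) ≃* (K ⧸ G₀.subgroupOf K)) := by
  have hH₀stab : H₀ = MulAction.stabilizer H α := SetLike.coe_injective hH₀
  have hI₁ := fst_pairStabilizerOn_surjective H α K
  have hI₂ := snd_pairStabilizerOn_surjective α fun g hg ↦
    (Set.ext_iff.1 hG₁ g).1 (hKG₁ hg)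
  have hFst : (pairStabilizerOn H α K).goursatFst = H₀.subgroupOf (leftPartner H α K) := by
    ext h
    rw [mem_goursatFst_pairStabilizerOn, Subgroup.mem_subgroupOf, hH₀stab]
    rfl
  have hSnd : (pairStabilizerOn H α K).goursatSnd = G₀.subgroupOf K := by
    ext g
    rw [mem_goursatSnd_pairStabilizerOn, Subgroup.mem_subgroupOf, ← SetLike.mem_coe, hG₀]
    rfl
  have hFstNormal := Subgroup.normal_goursatFst hI₁
  have hSndNormal := Subgroup.normal_goursatSnd hI₂
  have hn : (H₀.subgroupOf (leftPartner H α K)).Normal := hFst ▸ hFstNormal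
  obtain ⟨e, -⟩ := Subgroup.goursat_surjective hI₁ hI₂
  refine ⟨leftPartner H α K, coe_leftPartner H α K, ?_,
    hH₀stab ▸ stabilizer_le_leftPartner α K, hn,
    ⟨(QuotientGroup.quotientMulEquivOfEq hFst.symm).trans
      (e.trans (QuotientGroup.quotientMulEquivOfEq hSnd))⟩⟩
  intro h hh
  obtain ⟨g, -, hg⟩ := mem_leftPartner.1 hh
  rw [← SetLike.mem_coe, hH₁]
  exact ⟨g, hg⟩

/-- For an `(H,G)`-biset `X` with fixed point `α`, and an intermediate subgroup
`G₀ ≤ K ≤ G₁`, the set `L = {h | ∃ g ∈ K, h·α = α·g}` is a subgroup of `H` with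
`H₀ ≤ L ≤ H₁`, `H₀` is normal in `L`, and `L/H₀ ≅ K/G₀` as groups. -/
theorem biset_intermediate_stabilizer_iso
    {G H X : Type} [Group G] [Group H] [MulAction Gᵐᵒᵖ X] [MulAction H X]
    [SMulCommClass H Gᵐᵒᵖ X] (α : X)
    (G₀ G₁ : Subgroup G) (H₀ H₁ : Subgroup H)
    (hG₀ : (G₀ : Set G) = {g : G | op g • α = α})
    (hG₁ : (G₁ : Set G) = {g : G | ∃ h : H, op g • α = h • α})
    (hH₀ : (H₀ : Set H) = {h : H | h • α = α})
    (hH₁ : (H₁ : Set H) = {h : H | ∃ g : G, h • α = op g • α})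
    (K : Subgroup G) (hG₀K : G₀ ≤ K) (hKG₁ : K ≤ G₁)
    [(G₀.subgroupOf K).Normal] :
    ∃ L : Subgroup H,
      ((L : Set H) = {h : H | ∃ g ∈ K, h • α = op g • α}) ∧
      L ≤ H₁ ∧ H₀ ≤ L ∧
      ∃ hn : (H₀.subgroupOf L).Normal,
        letI := hn
        Nonempty ((L ⧸ H₀.subgroupOf L) ≃* (K ⧸ G₀.subgroupOf K)) :=
  biset_intermediate_stabilizer_iso_general α G₀ G₁ H₀ H₁ hG₀ hG₁ hH₀ hH₁ K hKG₁
end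

section
/- Let C be a skeletal finite EI category with exactly two objects x, y, with C(y,x) = ∅, G = C(x,x), H = C(y,y), and C(x,y) = H·α·G a single biset orbit for some fixed α ∈ C(x,y). Let G₀ = Stab_G(α), G₁ = Stab_G(H·α), H₀ = Stab_H(α), H₁ = Stab_H(α·G). A representation of C is determined by a kG-module V, a kH-module W, and a k-linear map φ : V → W (the value on α). Then φ defines a representation of C if and only if: ker(φ) is stable under G₁ and the induced G₁-action on V/ker(φ) has G₀ acting trivially; im(φ) is stable under H₁ with H₀ acting trivially; and the induced bijection V/ker(φ) → im(φ) is equivariant for the canonical isomorphism G₁/G₀ ≅ H₁/H₀. -/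
open MulOpposite

/-- Let `C` be a skeletal finite EI category with two objects `x, y`, `G = C(x,x)`,
`H = C(y,y)`, and `C(x,y) = H·α·G` a single biset orbit (modelled by the `(H,G)`-biset
`X` generated by `α`).  A representation of `C` is determined by a `kG`-module `V`, a
`kH`-module `W` and a linear map `φ : V → W` (the value on `α`), extended by
`R(h·α·g) = h ∘ φ ∘ g`.  The map `φ` defines a representation (i.e. this extension is
well defined) iff: `ker φ` is `G₁`-stable with `G₀` acting trivially on `V/ker φ`;
`im φ` is `H₁`-stable with `H₀` acting trivially; and the induced bijection
`V/ker φ → im φ` is equivariant for the canonical isomorphism `G₁/G₀ ≅ H₁/H₀`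
(which matches `g` with `h` whenever `α·g = h·α`). -/
theorem twoObject_EI_representation_characterization
    {k G H X : Type} [Field k] [Group G] [Group H] [Finite G] [Finite H] [Finite X]
    [MulAction Gᵐᵒᵖ X] [MulAction H X] [SMulCommClass H Gᵐᵒᵖ X] (α : X)
    (hgen : ∀ x : X, ∃ (h : H) (g : G), x = h • (op g • α))
    (V W : Type) [AddCommGroup V] [Module k V] [DistribMulAction G V] [SMulCommClass G k V]
    [AddCommGroup W] [Module k W] [DistribMulAction H W] [SMulCommClass H k W]
    (φ : V →ₗ[k] W) :
    -- well-definedness of the representation extending `φ`: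
    (∀ (g₁ g₂ : G) (h₁ h₂ : H), h₁ • (op g₁ • α) = h₂ • (op g₂ • α) →
        ∀ v : V, h₁ • φ (g₁ • v) = h₂ • φ (g₂ • v)) ↔
    -- `ker φ` is stable under `G₁ = Stab_G(H·α)`:
    ((∀ g : G, (∃ h : H, op g • α = h • α) → ∀ v : V, φ v = 0 → φ (g • v) = 0) ∧
    -- `G₀ = Stab_G(α)` acts trivially on `V / ker φ`:
      (∀ g : G, op g • α = α → ∀ v : V, φ (g • v) = φ v) ∧
    -- `im φ` is stable under `H₁ = Stab_H(α·G)`: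
      (∀ h : H, (∃ g : G, h • α = op g • α) →
        ∀ w ∈ LinearMap.range φ, h • w ∈ LinearMap.range φ) ∧
    -- `H₀ = Stab_H(α)` acts trivially on `im φ`:
      (∀ h : H, h • α = α → ∀ v : V, h • φ v = φ v) ∧
    -- equivariance of `V/ker φ ≅ im φ` for the canonical isomorphism `G₁/G₀ ≅ H₁/H₀`:
      (∀ (g : G) (h : H), op g • α = h • α → ∀ v : V, φ (g • v) = h • φ v)) := by
  constructor
  · intro hw
    have key : ∀ (g : G) (h : H), op g • α = h • α → ∀ v : V, φ (g • v) = h • φ v := by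
      intro g h hgh v
      have := hw g 1 1 h (by simpa using hgh) v
      simpa using this
    refine ⟨fun g hg v hv => ?_, fun g hg v => ?_, fun h hh w hw' => ?_,
      fun h hh v => ?_, key⟩
    · obtain ⟨h, hg⟩ := hg
      rw [key g h hg v, hv, smul_zero]
    · simpa using key g 1 (by simpa using hg) v
    · obtain ⟨g, hg⟩ := hh
      obtain ⟨v, hv⟩ := hw'
      exact ⟨g • v, by rw [key g h hg.symm v, hv]⟩
    · have := key 1 h (by simpa using hh.symm) v
      simpa using this.symm
  · rintro ⟨-, -, -, -, key⟩ g₁ g₂ h₁ h₂ heq v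
    have e1 : op g₁ • α = (h₁⁻¹ * h₂) • (op g₂ • α) := by
      rw [mul_smul]
      rw [eq_inv_smul_iff]
      exact heq
    have e2 : op (g₁ * g₂⁻¹) • α = (h₁⁻¹ * h₂) • α := by
      have : op (g₁ * g₂⁻¹) • α = op g₂⁻¹ • (op g₁ • α) := by
        rw [smul_smul]; congr 1
      rw [this, e1, ← smul_comm (h₁⁻¹ * h₂) (op g₂⁻¹) (op g₂ • α), smul_smul]
      simp
    have := key (g₁ * g₂⁻¹) (h₁⁻¹ * h₂) e2 (g₂ • v)
    rw [smul_smul, inv_mul_cancel_right] at this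
    rw [this, mul_smul, smul_smul, mul_inv_cancel, one_smul]
end
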